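/- arXiv:2012.11993 — 3 statements merged into one kernel-verified Lean document; each statement's English description precedes it below -/
import Mathlib

section
/- For integers 0 ≤ k ≤ N-1 and l ≥ N, one has (k - l) · ∑_{j=k}^{N-1} (-1)^j/((j-k)!·(l-j)!) = (-1)^N / ((N-k-1)!·(l-N)!). -/
/-- Telescoping sum: for `0 ≤ k ≤ N-1` and `l ≥ N`,
`(k - l) · ∑_{j=k}^{N-1} (-1)^j/((j-k)!(l-j)!) = (-1)^N/((N-k-1)!(l-N)!)`. -/
theorem telescoping_alt_sum (N k l : ℕ) (hN : 1 ≤ N) (hk : k ≤ N - 1) (hl : N ≤ l) :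
    ((k : ℝ) - (l : ℝ)) *
        ∑ j ∈ Finset.Icc k (N - 1),
          ((-1 : ℝ)) ^ j / ((Nat.factorial (j - k)) * (Nat.factorial (l - j)))
      = (-1 : ℝ) ^ N / ((Nat.factorial (N - k - 1)) * (Nat.factorial (l - N))) := by
  have hkN : k < N := by omega
  set g : ℕ → ℝ := fun j =>
    (-1 : ℝ) ^ j * ((j : ℝ) - k) / ((Nat.factorial (j - k)) * (Nat.factorial (l - j))) with hg
  have key : ∀ j ∈ Finset.Ico k N,
      ((k : ℝ) - l) * ((-1 : ℝ) ^ j / ((Nat.factorial (j - k)) * (Nat.factorial (l - j))))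
        = g (j + 1) - g j := by
    intro j hj
    simp only [Finset.mem_Ico] at hj
    obtain ⟨h1, h2⟩ := hj
    obtain ⟨a, rfl⟩ : ∃ a, j = k + a := ⟨j - k, by omega⟩
    obtain ⟨b, rfl⟩ : ∃ b, l = k + a + 1 + b := ⟨l - (k + a + 1), by omega⟩
    simp only [hg]
    have e1 : k + a - k = a := by omega
    have e2 : k + a + 1 + b - (k + a) = b + 1 := by omega
    have e3 : k + a + 1 - k = a + 1 := by omega
    have e4 : k + a + 1 + b - (k + a + 1) = b := by omega
    rw [e1, e2, e3, e4, Nat.factorial_succ, Nat.factorial_succ, pow_succ]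
    have fa : ((Nat.factorial a) : ℝ) ≠ 0 := by positivity
    have fb : ((Nat.factorial b) : ℝ) ≠ 0 := by positivity
    push_cast
    field_simp
    ring
  have hIcc : Finset.Icc k (N - 1) = Finset.Ico k N := by
    rw [← Finset.Ico_add_one_right_eq_Icc]; congr 1; omega
  rw [hIcc, Finset.mul_sum, Finset.sum_congr rfl key,
    Finset.sum_Ico_eq_sub _ (le_of_lt hkN), Finset.sum_range_sub, Finset.sum_range_sub]
  have gk : g k = 0 := by simp [hg]
  rw [gk, show g N - g 0 - (0 - g 0) = g N by ring, hg]
  obtain ⟨c, rfl⟩ : ∃ c, N = k + c + 1 := ⟨N - k - 1, by omega⟩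
  have e5 : k + c + 1 - k = c + 1 := by omega
  beta_reduce
  rw [e5, Nat.add_sub_cancel, Nat.factorial_succ]
  have fa : ((Nat.factorial c) : ℝ) ≠ 0 := by positivity
  have fb : ((Nat.factorial (l - (k + c + 1))) : ℝ) ≠ 0 := by positivity
  push_cast
  field_simp
  ring
end

section
/- Let s_1,...,s_N be complex numbers and c a complex number with c + s_j ≠ 0 for all j. Then the N×N determinant whose first N-1 columns are s_a^{b-1} (a row index, b = 1,...,N-1) and whose last column is 1/(c + s_a) equals (-1)^{N-1}·Δ_N(s) / ∏_{j=1}^N (c + s_j), where Δ_N(s) = ∏_{1≤a<b≤N}(s_b - s_a). -/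
/-- Cauchy-type determinant: the `N×N` determinant with columns `s_a^{b-1}` for `b < N`
and last column `1/(c+s_a)` equals `(-1)^{N-1} Δ_N(s)/∏_j(c+s_j)`. -/
theorem cauchy_type_det (N : ℕ) (hN : 1 ≤ N) (s : Fin N → ℂ) (c : ℂ)
    (h : ∀ j, c + s j ≠ 0) :
    Matrix.det (Matrix.of fun a b : Fin N =>
        if (b : ℕ) < N - 1 then s a ^ (b : ℕ) else 1 / (c + s a))
      = (-1) ^ (N - 1) *
          (∏ a : Fin N, ∏ b ∈ Finset.univ.filter (fun b => a < b), (s b - s a)) /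
          ∏ j : Fin N, (c + s j) := by
  obtain ⟨n, rfl⟩ : ∃ n, N = n + 1 := ⟨N - 1, (Nat.succ_pred_eq_of_pos hN).symm⟩
  set M : Matrix (Fin (n+1)) (Fin (n+1)) ℂ := Matrix.of fun a b =>
      if (b : ℕ) < n + 1 - 1 then s a ^ (b : ℕ) else 1 / (c + s a) with hM
  set T : Matrix (Fin (n+1)) (Fin (n+1)) ℂ := Matrix.of fun k j =>
      (if k = j then (1:ℂ) else 0) + (if (k : ℕ) + 1 = (j : ℕ) then c else 0) with hT
  have hTdet : T.det = 1 := by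
    rw [Matrix.det_of_upperTriangular]
    · apply Finset.prod_eq_one
      intro i _
      simp [hT]
    · intro i j hij
      have hji : (j : ℕ) < (i : ℕ) := hij
      simp only [hT, Matrix.of_apply]
      rw [if_neg (by rintro rfl; omega), if_neg (by omega)]
      ring
  have key : (Matrix.diagonal fun a => c + s a) * M
      = ((Matrix.vandermonde s * T).submatrix id (finRotate (n+1))) := by
    ext a b
    rw [Matrix.diagonal_mul]
    simp only [Matrix.submatrix_apply, id_eq, Matrix.mul_apply, Matrix.vandermonde,
      hT, Matrix.of_apply, hM, Nat.add_sub_cancel]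
    simp only [mul_add, mul_ite, mul_zero, mul_one, Finset.sum_add_distrib,
      Finset.sum_ite_eq' Finset.univ, Finset.mem_univ, if_true]
    by_cases hb : (b : ℕ) < n
    · have hbl : b < Fin.last n := by rw [Fin.lt_def]; simpa using hb
      have hbv : ((finRotate (n+1)) b : ℕ) = (b : ℕ) + 1 := by
        rw [finRotate_succ_apply]; exact Fin.val_add_one_of_lt hbl
      rw [if_pos hb, hbv]
      have hsum : (∑ x : Fin (n+1), if (x : ℕ) + 1 = (b : ℕ) + 1 then s a ^ (x : ℕ) * c else 0)
          = s a ^ (b : ℕ) * c := by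
        rw [Finset.sum_eq_single b
          (fun x _ hx => if_neg fun he => hx (Fin.val_injective (by omega)))
          (fun hb' => absurd (Finset.mem_univ b) hb'), if_pos rfl]
      rw [hsum, pow_succ]
      ring
    · have hbe : b = Fin.last n := Fin.ext (by simpa using Nat.le_antisymm (by omega) (by omega))
      have hbv : ((finRotate (n+1)) b : ℕ) = 0 := by rw [hbe, finRotate_last]; rfl
      rw [if_neg hb, hbv]
      rw [Finset.sum_eq_zero fun x _ => by rw [if_neg (by omega)]]
      rw [pow_zero, add_zero]
      rw [mul_one_div, div_self (h a)]
  have hdet := congrArg Matrix.det key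
  rw [Matrix.det_mul, Matrix.det_diagonal, Matrix.det_permute', Matrix.det_mul, hTdet,
    Matrix.det_vandermonde, sign_finRotate] at hdet
  have hprod : (∏ j, (c + s j)) ≠ 0 := Finset.prod_ne_zero_iff.mpr fun j _ => h j
  have hfil : ∀ a : Fin (n+1), Finset.univ.filter (fun b => a < b) = Finset.Ioi a := by
    intro a; ext b; simp
  rw [Nat.add_sub_cancel, eq_div_iff hprod]
  simp only [hfil]
  push_cast at hdet
  rw [mul_one] at hdet
  linear_combination hdet
end

section
/- Let ω be a weight on the unit circle with Fourier coefficients u_s = Sω(s), such that u_s ≠ 0 for s = 0,...,N-1 and ∑_s |s|^{N-1}|u_s| < ∞. Define P_j(z) = ∑_{k=0}^{j} (-z)^k/((j-k)!·k!·u_k) and Q_j(z) = ∑_{l∈ℤ\{0,...,j-1}} (Γ(j-l)/Γ(-l))·u_l·z^{-l} (where for l ≥ j the coefficient Γ(j-l)/Γ(-l) is interpreted as (-1)^j·l!/(l-j)!, and for l < 0 as (j-l-1)!/(-l-1)!). Then (1/2π)∫_{-π}^π P_a(e^{iθ})·Q_b(e^{iθ}) dθ = δ_{ab} for all 0 ≤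 a, b ≤ N-1. -/
open MeasureTheory

/-- The coefficient `Γ(j-l)/Γ(-l)` of the weight function `Q_j`: it equals
`(j-l-1)!/(-l-1)!` for `l < 0`, `(-1)^j·l!/(l-j)!` for `l ≥ j`, and `0` otherwise. -/
noncomputable def coefQ (j : ℕ) (l : ℤ) : ℝ :=
  if l < 0 then (Nat.factorial ((j : ℤ) - l - 1).toNat : ℝ) / (Nat.factorial (-l - 1).toNat)
  else if (j : ℤ) ≤ l then (-1 : ℝ) ^ j * (Nat.factorial l.toNat : ℝ) /
    (Nat.factorial (l - (j : ℤ)).toNat)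
  else 0

/-! Write `P_a(z) = ∑_{k ≤ a} p_k z^k` and `Q_b(z) = ∑_l q_l z^{-l}`. Since `∑ |q_l| < ∞`,
the mean of `P_a Q_b` over the circle can be taken termwise, and only the diagonal survives:
it equals `∑_k p_k q_k`. The factors `u_k` cancel and `q_k = 0` for `0 ≤ k < b`, so the sum
vanishes for `a < b`; otherwise, as `q_k = (-1)^b u_k k!/(k-b)!` for `k ≥ b`, it is
`∑_{k=b}^{a} (-1)^{k-b} / ((a-k)! (k-b)!) = (1 - 1)^{a-b} / (a-b)!`. -/

open Complex Finset Nat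
open scoped Real

lemma coefQ_natCast (b k : ℕ) :
    coefQ b k = if b ≤ k then (-1) ^ b * (k.descFactorial b : ℝ) else 0 := by
  by_cases hbk : b ≤ k
  · have hfact := congrArg (Nat.cast (R := ℝ)) (Nat.factorial_mul_descFactorial hbk)
    push_cast at hfact
    simp only [coefQ, if_pos hbk, if_neg (Int.natCast_nonneg k).not_gt,
      if_pos (Int.ofNat_le.mpr hbk), Int.toNat_natCast, ← Int.natCast_sub hbk, ← hfact]
    field_simp
  · simp [coefQ, hbk]

lemma coefQ_negSucc (b m : ℕ) : coefQ b (Int.negSucc m) = ((m + 1).ascFactorial b : ℝ) := by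
  have hfact := congrArg (Nat.cast (R := ℝ)) (Nat.factorial_mul_ascFactorial m b)
  push_cast at hfact
  have hnum : ((b : ℤ) - Int.negSucc m - 1).toNat = m + b := by omega
  have hden : (-Int.negSucc m - 1).toNat = m := by omega
  rw [coefQ, if_pos (Int.negSucc_lt_zero m), hnum, hden, ← hfact]
  field_simp

lemma abs_coefQ_le (b : ℕ) (l : ℤ) : |coefQ b l| ≤ ((b + l.natAbs : ℕ) : ℝ) ^ b := by
  cases l with
  | ofNat k =>
    rw [Int.ofNat_eq_natCast, coefQ_natCast]
    split_ifs
    · rw [abs_mul, abs_pow, abs_neg, abs_one, one_pow, one_mul, Nat.abs_cast]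
      exact_mod_cast (k.descFactorial_le_pow b).trans (Nat.pow_le_pow_left (by simp) b)
    · rw [abs_zero]; positivity
  | negSucc m =>
    rw [coefQ_negSucc, Nat.abs_cast]
    exact_mod_cast (m.ascFactorial_le_pow_add b).trans (Nat.pow_le_pow_left (by simp; omega) b)

lemma summable_norm_coefQ_mul {N b : ℕ} {u : ℤ → ℂ}
    (hsum : Summable fun s : ℤ => (|s| : ℝ) ^ (N - 1) * ‖u s‖) (hb : b < N) :
    Summable fun l : ℤ => ‖(coefQ b l : ℂ) * u l‖ := by
  refine Summable.of_norm_bounded_eventually (hsum.mul_left (((b : ℝ) + 1) ^ b)) ?_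
  filter_upwards [Filter.eventually_cofinite_ne 0] with l hl
  have hl1 : (1 : ℝ) ≤ |(l : ℝ)| := by exact_mod_cast Int.one_le_abs hl
  have hcoef : |coefQ b l| ≤ ((b : ℝ) + 1) ^ b * |(l : ℝ)| ^ (N - 1) :=
    calc |coefQ b l| ≤ ((b : ℝ) + |(l : ℝ)|) ^ b := by
          simpa [Nat.cast_natAbs] using abs_coefQ_le b l
      _ ≤ (((b : ℝ) + 1) * |(l : ℝ)|) ^ b := by gcongr; nlinarith
      _ ≤ ((b : ℝ) + 1) ^ b * |(l : ℝ)| ^ (N - 1) := by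
          rw [mul_pow]; gcongr; omega
  rw [norm_norm, norm_mul, norm_real, Real.norm_eq_abs, ← mul_assoc]
  gcongr

lemma norm_exp_I_mul_ofReal_zpow (θ : ℝ) (m : ℤ) : ‖exp (I * θ) ^ m‖ = 1 := by
  rw [norm_zpow, norm_exp_I_mul_ofReal, one_zpow]

lemma continuous_exp_I_mul_ofReal_zpow (m : ℤ) : Continuous fun θ : ℝ => exp (I * θ) ^ m :=
  (by fun_prop : Continuous fun θ : ℝ => exp (I * θ)).zpow₀ m fun _ => Or.inl (exp_ne_zero _)

lemma integral_exp_mul_I_zpow (m : ℤ) :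
    ∫ θ in (-π)..π, exp (I * θ) ^ m = if m = 0 then (2 * π : ℂ) else 0 := by
  have hexp : ∀ θ : ℝ, exp (I * θ) ^ m = exp (m * I * θ) := fun θ => by
    rw [← exp_int_mul, mul_assoc]
  simp_rw [hexp]
  split_ifs with hm
  · simp [hm]; ring
  · rw [integral_exp_mul_complex (by simp [hm]), div_eq_zero_iff, sub_eq_zero]
    left
    calc exp (m * I * π) = exp (m * I * ↑(-π) + m * (2 * π * I)) := by push_cast; ring_nf
      _ = exp (m * I * ↑(-π)) := by rw [exp_add, exp_int_mul_two_pi_mul_I, mul_one]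

lemma integral_zpow_mul_tsum {d : ℤ → ℂ} (hd : Summable fun l => ‖d l‖) (k : ℤ) :
    ∫ θ in (-π)..π, exp (I * θ) ^ k * ∑' l, d l * exp (I * θ) ^ (-l)
      = 2 * π * d k := by
  have hnorm : ∀ (l : ℤ) (θ : ℝ), ‖d l * exp (I * θ) ^ (k - l)‖ = ‖d l‖ := fun l θ => by
    rw [norm_mul, norm_exp_I_mul_ofReal_zpow, mul_one]
  have hseries : ∀ θ : ℝ, exp (I * θ) ^ k * ∑' l, d l * exp (I * θ) ^ (-l)
      = ∑' l, d l * exp (I * θ) ^ (k - l) := fun θ => by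
    rw [← tsum_mul_left]
    congr 1 with l
    rw [sub_eq_add_neg, zpow_add₀ (exp_ne_zero _)]
    ring
  have hterm : ∀ l : ℤ, ∫ θ in (-π)..π, d l * exp (I * θ) ^ (k - l)
      = if l = k then 2 * π * d k else 0 := fun l => by
    rw [intervalIntegral.integral_const_mul, integral_exp_mul_I_zpow]
    by_cases h : l = k
    · simp [h, mul_comm]
    · simp [h, sub_eq_zero, Ne.symm h]
  have hsum := intervalIntegral.hasSum_integral_of_dominated_convergence (μ := volume)
    (a := -π) (b := π) (F := fun l θ => d l * exp (I * θ) ^ (k - l)) (fun l _ => ‖d l‖)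
    (fun l => (continuous_const.mul (continuous_exp_I_mul_ofReal_zpow _)).aestronglyMeasurable)
    (fun l => ae_of_all _ fun θ _ => (hnorm l θ).le) (ae_of_all _ fun _ _ => hd)
    intervalIntegrable_const
    (ae_of_all _ fun θ _ => (hd.of_norm_bounded fun l => (hnorm l θ).le).hasSum)
  simp_rw [hterm] at hsum
  simp_rw [hseries]
  exact hsum.unique (hasSum_ite_eq k _)

lemma integral_sum_pow_mul_tsum (c : ℕ → ℂ) (n : ℕ) {d : ℤ → ℂ}
    (hd : Summable fun l => ‖d l‖) :
    (1 / (2 * π) : ℂ) * ∫ θ in (-π)..π,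
        (∑ k ∈ range n, c k * exp (I * θ) ^ k) * ∑' l, d l * exp (I * θ) ^ (-l)
      = ∑ k ∈ range n, c k * d k := by
  have hQ : Continuous fun θ : ℝ => ∑' l, d l * exp (I * θ) ^ (-l) :=
    continuous_tsum (fun l => continuous_const.mul (continuous_exp_I_mul_ofReal_zpow _)) hd
      fun l θ => by rw [norm_mul, norm_exp_I_mul_ofReal_zpow, mul_one]
  simp_rw [sum_mul, mul_assoc]
  rw [intervalIntegral.integral_finsetSum fun k _ => Continuous.intervalIntegrable
    (by fun_prop : Continuous fun θ : ℝ =>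
      c k * (exp (I * θ) ^ k * ∑' l, d l * exp (I * θ) ^ (-l))) _ _, mul_sum]
  refine sum_congr rfl fun k _ => ?_
  rw [intervalIntegral.integral_const_mul]
  simp_rw [← zpow_natCast]
  rw [integral_zpow_mul_tsum hd]
  field_simp

lemma sum_range_neg_one_pow_div_factorial_mul_factorial {K : Type*} [Field K] [CharZero K]
    (n : ℕ) :
    ∑ j ∈ range (n + 1), (-1 : K) ^ j / ((n - j)! * j !) = if n = 0 then 1 else 0 := by
  have hchoose : ∀ j ∈ range (n + 1), (-1 : K) ^ j / ((n - j)! * j !)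
      = (-1) ^ j * n.choose j / n ! := fun j hj => by
    have : (n ! : K) ≠ 0 := cast_ne_zero.mpr (factorial_ne_zero n)
    rw [cast_choose K (by grind)]
    field_simp
  have halt := congrArg (Int.cast (R := K)) (Int.alternating_sum_range_choose (n := n))
  push_cast at halt
  rw [sum_congr rfl hchoose, ← sum_div, halt]
  split_ifs with hn <;> simp [hn]

lemma sum_neg_one_pow_mul_coefQ_div_factorial (a b : ℕ) :
    ∑ k ∈ range (a + 1), (-1 : ℂ) ^ k * coefQ b k / ((a - k)! * k !)
      = if a = b then 1 else 0 := by
  have hlow : ∀ k < b, (-1 : ℂ) ^ k * coefQ b k / ((a - k)! * k !) = 0 := fun k hk => by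
    rw [coefQ_natCast, if_neg (by omega)]
    simp
  rcases lt_or_ge a b with hab | hba
  · rw [if_neg hab.ne, sum_eq_zero fun k hk => hlow k (by grind)]
  obtain ⟨n, rfl⟩ := exists_add_of_le hba
  have hshift : ∀ j ∈ range (n + 1), (-1 : ℂ) ^ (b + j) * coefQ b (b + j : ℕ)
      / ((b + n - (b + j))! * (b + j)!) = (-1) ^ j / ((n - j)! * j !) := fun j _ => by
    have hfact := congrArg (Nat.cast (R := ℂ)) (factorial_mul_descFactorial (le_add_right b j))
    have hsign : (-1 : ℂ) ^ b * (-1) ^ b = 1 := by rw [← mul_pow]; simp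
    push_cast at hfact
    rw [coefQ_natCast, if_pos (le_add_right b j), Nat.add_sub_add_left, ← hfact,
      Nat.add_sub_cancel_left]
    push_cast
    rw [pow_add]
    field_simp
    rw [sq, hsign]
  rw [add_assoc, sum_range_add, sum_eq_zero fun k hk => hlow k (mem_range.mp hk), zero_add,
    sum_congr rfl hshift, sum_range_neg_one_pow_div_factorial_mul_factorial]
  simp

theorem biorthonormality_general (N : ℕ) (u : ℤ → ℂ)
    (hu : ∀ s : ℕ, s < N → u s ≠ 0)
    (hsum : Summable fun s : ℤ => (|s| : ℝ) ^ (N - 1) * ‖u s‖)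
    (a b : ℕ) (ha : a < N) (hb : b < N) :
    (1 / (2 * Real.pi) : ℂ) *
        ∫ θ in (-Real.pi)..Real.pi,
          (∑ k ∈ Finset.range (a + 1),
              (-(Complex.exp (Complex.I * θ))) ^ k /
                ((Nat.factorial (a - k)) * (Nat.factorial k) * u k)) *
            (∑' l : ℤ, (coefQ b l : ℂ) * u l * Complex.exp (Complex.I * θ) ^ (-l))
      = if a = b then 1 else 0 := by
  have hP : ∀ θ : ℝ, ∑ k ∈ range (a + 1), (-(exp (I * θ))) ^ k / ((a - k)! * k ! * u k)
      = ∑ k ∈ range (a + 1), (-1) ^ k / ((a - k)! * k ! * u k) * exp (I * θ) ^ k :=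
    fun θ => sum_congr rfl fun k _ => by rw [neg_pow]; ring
  simp_rw [hP]
  rw [integral_sum_pow_mul_tsum _ _ (summable_norm_coefQ_mul hsum hb),
    ← sum_neg_one_pow_mul_coefQ_div_factorial]
  refine sum_congr rfl fun k hk => ?_
  have huk : u k ≠ 0 := hu k (by grind)
  field_simp

/-- Bi-orthonormality of the pair `P_a`, `Q_b` built from the Fourier coefficients `u_s`
of a cyclic Pólya weight: `(1/2π)∫_{-π}^{π} P_a(e^{iθ}) Q_b(e^{iθ}) dθ = δ_{ab}`. -/
theorem biorthonormality (N : ℕ) (hN : 1 ≤ N) (u : ℤ → ℂ)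
    (hu : ∀ s : ℕ, s < N → u s ≠ 0)
    (hsum : Summable fun s : ℤ => (|s| : ℝ) ^ (N - 1) * ‖u s‖)
    (a b : ℕ) (ha : a < N) (hb : b < N) :
    (1 / (2 * Real.pi) : ℂ) *
        ∫ θ in (-Real.pi)..Real.pi,
          (∑ k ∈ Finset.range (a + 1),
              (-(Complex.exp (Complex.I * θ))) ^ k /
                ((Nat.factorial (a - k)) * (Nat.factorial k) * u k)) *
            (∑' l : ℤ, (coefQ b l : ℂ) * u l * Complex.exp (Complex.I * θ) ^ (-l))
      = if a = b then 1 else 0 :=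
  biorthonormality_general N u hu hsum a b ha hb
end
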